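/- Define QBER(p) = 1 − (1 − 4p + 6p² − 4p³ + 28p⁴/27)/(1 − 4p + 8p² − 64p³/9 + 64p⁴/27) for p ∈ [0,1]. Then QBER(p) < 2p − p² for every p ∈ (0, 1/2), and QBER(1/2) = 3/4 = 2·(1/2) − (1/2)². (Hence the probability threshold of the two-logical-qubit error-detection scheme using two noisy EPR pairs, relative to the uncoded two-qubit error ratio 2p − p², is p_th = 1/2.) -/

import Mathlib

/-!
Write `p_s = N/D`. In the variable `y = 1 - 2p` the denominator `D` has positive coefficients,
and the gap `N - (1 - p)² D` between the coded and uncoded success probabilities factors as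
`p (1 - 2p)` times a polynomial with positive coefficients in `y`. So the gap is positive on
`(0, 1/2)` and vanishes at `p = 1/2`.
-/

/-- The qubit error ratio of the two-logical-qubit error-detection scheme using two noisy
EPR pairs over quantum depolarizing channels with depolarizing probability `p`. -/
noncomputable def QBER (p : ℝ) : ℝ :=
  1 - (1 - 4*p + 6*p^2 - 4*p^3 + 28*p^4/27) / (1 - 4*p + 8*p^2 - 64*p^3/9 + 64*p^4/27)

namespace QBER

noncomputable def successNum (p : ℝ) : ℝ := 1 - 4*p + 6*p^2 - 4*p^3 + 28*p^4/27

noncomputable def successDen (p : ℝ) : ℝ := 1 - 4*p + 8*p^2 - 64*p^3/9 + 64*p^4/27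

theorem eq_one_sub_successNum_div_successDen (p : ℝ) :
    QBER p = 1 - successNum p / successDen p := rfl

theorem successDen_eq (p : ℝ) :
    27 * successDen p =
      7 + 2 * (1 - 2*p) + 6 * (1 - 2*p)^2 + 8 * (1 - 2*p)^3 + 4 * (1 - 2*p)^4 := by
  unfold successDen
  ring

theorem successDen_pos {p : ℝ} (hp : p ≤ 1/2) : 0 < successDen p := by
  have hy : 0 ≤ 1 - 2*p := by linarith
  have : 0 < 27 * successDen p := by
    rw [successDen_eq]
    positivity
  linarith

theorem successNum_sub_eq (p : ℝ) :
    54 * (successNum p - (1 - p)^2 * successDen p) =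
      p * (1 - 2*p) *
        (10 + 35 * (1 - 2*p) + 39 * (1 - 2*p)^2 + 20 * (1 - 2*p)^3 + 4 * (1 - 2*p)^4) := by
  unfold successNum successDen
  ring

theorem sq_one_sub_mul_successDen_lt {p : ℝ} (hp₀ : 0 < p) (hp₁ : p < 1/2) :
    (1 - p)^2 * successDen p < successNum p := by
  have hy : 0 < 1 - 2*p := by linarith
  have : 0 < 54 * (successNum p - (1 - p)^2 * successDen p) := by
    rw [successNum_sub_eq]
    positivity
  linarith

theorem lt_two_mul_sub_sq {p : ℝ} (hp₀ : 0 < p) (hp₁ : p < 1/2) : QBER p < 2*p - p^2 := by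
  have h := (lt_div_iff₀ (successDen_pos hp₁.le)).2 (sq_one_sub_mul_successDen_lt hp₀ hp₁)
  rw [eq_one_sub_successNum_div_successDen]
  linarith

theorem one_half : QBER (1/2) = 3/4 := by
  norm_num [QBER]

end QBER

/-- `QBER(p) < 2p − p²` for every `p ∈ (0, 1/2)`, and `QBER(1/2) = 3/4 = 2·(1/2) − (1/2)²`;
hence the probability threshold of the two-logical-qubit error-detection scheme using two
noisy EPR pairs, relative to the uncoded two-qubit error ratio `2p − p²`, is `p_th = 1/2`. -/
theorem stmt13 :
    (∀ p ∈ Set.Ioo (0 : ℝ) (1/2), QBER p < 2*p - p^2) ∧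
    QBER (1/2) = 3/4 ∧ (3/4 : ℝ) = 2*(1/2) - (1/2)^2 :=
  ⟨fun _ hp => QBER.lt_two_mul_sub_sq hp.1 hp.2, QBER.one_half, by norm_num⟩
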